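/- arXiv:2204.05829 — 2 statements merged into one kernel-verified Lean document; each statement's English description precedes it below -/
import Mathlib

section
/- Let P be a finite poset and let V_P ⊆ {0,1}^P be the set of indicator vectors of order filters of P, i.e., vectors a with a_p = 1 ⟹ a_q = 1 whenever p ≤ q. Then V_P is exactly the vertex set of the order polytope O(P) = {a ∈ [0,1]^P : a_p ≤ a_q for all p ≤ q}, i.e., the set of extreme points of O(P). -/
/-- The vertices (extreme points) of the order polytope of a finite poset
are exactly the indicator vectors of order filters. -/
theorem stmt7 {P : Type*} [PartialOrder P] [Fintype P] :
    Set.extremePoints ℝ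
        {a : P → ℝ | (∀ p, a p ∈ Set.Icc (0 : ℝ) 1) ∧
          ∀ p q : P, p ≤ q → a p ≤ a q}
      = {a : P → ℝ | (∀ p, a p = 0 ∨ a p = 1) ∧
          ∀ p q : P, p ≤ q → a p = 1 → a q = 1} := by
  ext a
  simp only [mem_extremePoints, Set.mem_setOf_eq]
  constructor
  · rintro ⟨⟨hbd, hmono⟩, hext⟩
    constructor
    · intro p
      by_contra h
      push_neg at h
      obtain ⟨h0, h1⟩ := h
      set v := a p with hv
      have hv0 : 0 < v := lt_of_le_of_ne (hbd p).1 (Ne.symm h0)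
      have hv1 : v < 1 := lt_of_le_of_ne (hbd p).2 h1
      set f : P → ℝ := fun q =>
        if v < a q then a q - v else if a q < v then v - a q else min v (1 - v) with hf
      have hfpos : ∀ q, 0 < f q := by
        intro q
        simp only [hf]
        split_ifs with h1' h2'
        · linarith
        · linarith
        · exact lt_min hv0 (by linarith)
      set m := Finset.univ.inf' (Finset.univ_nonempty_iff.mpr ⟨p⟩) f with hm
      have hmpos : 0 < m := by
        rw [hm, Finset.lt_inf'_iff]
        exact fun q _ => hfpos q
      have hmle : ∀ q, m ≤ f q := fun q => Finset.inf'_le _ (Finset.mem_univ q)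
      have hmv : m ≤ min v (1 - v) := by
        have := hmle p
        simpa [hf, ← hv] using this
      have hgap1 : ∀ q, v < a q → v + m ≤ a q := by
        intro q hq
        have := hmle q
        rw [hf] at this
        simp only [if_pos hq] at this
        linarith
      have hgap2 : ∀ q, a q < v → a q ≤ v - m := by
        intro q hq
        have := hmle q
        rw [hf] at this
        simp only [if_neg (not_lt.mpr hq.le), if_pos hq] at this
        linarith
      set x₁ : P → ℝ := fun q => if a q = v then v + m else a q with hx1
      set x₂ : P → ℝ := fun q => if a q = v then v - m else a q with hx2
      have hmv1 : m ≤ v := le_trans hmv (min_le_left _ _)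
      have hmv2 : m ≤ 1 - v := le_trans hmv (min_le_right _ _)
      have h₁mem : (∀ q, x₁ q ∈ Set.Icc (0 : ℝ) 1) ∧ ∀ p' q' : P, p' ≤ q' → x₁ p' ≤ x₁ q' := by
        constructor
        · intro q
          simp only [hx1]
          split_ifs with hq
          · constructor <;> [linarith; linarith]
          · exact hbd q
        · intro p' q' hle
          have hmq := hmono p' q' hle
          simp only [hx1]
          split_ifs with h1' h2' h2'
          · exact le_rfl
          · rw [h1'] at hmq
            exact hgap1 q' (lt_of_le_of_ne hmq (Ne.symm h2'))
          · rw [h2'] at hmq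
            linarith
          · exact hmq
      have h₂mem : (∀ q, x₂ q ∈ Set.Icc (0 : ℝ) 1) ∧ ∀ p' q' : P, p' ≤ q' → x₂ p' ≤ x₂ q' := by
        constructor
        · intro q
          simp only [hx2]
          split_ifs with hq
          · constructor <;> [linarith; linarith]
          · exact hbd q
        · intro p' q' hle
          have hmq := hmono p' q' hle
          simp only [hx2]
          split_ifs with h1' h2' h2'
          · exact le_rfl
          · rw [h1'] at hmq
            have : v < a q' := lt_of_le_of_ne hmq (Ne.symm h2')
            linarith
          · rw [h2'] at hmq
            exact hgap2 p' (lt_of_le_of_ne hmq h1')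
          · exact hmq
      have hseg : a ∈ openSegment ℝ x₁ x₂ := by
        refine ⟨1/2, 1/2, by norm_num, by norm_num, by norm_num, ?_⟩
        funext q
        simp only [Pi.add_apply, Pi.smul_apply, smul_eq_mul, hx1, hx2]
        split_ifs with hq
        · rw [hq]; ring
        · ring
      have hx1a := (hext x₁ h₁mem x₂ h₂mem hseg).1
      have : x₁ p = a p := congrFun hx1a p
      simp only [hx1, ← hv, if_pos rfl, ↓reduceIte] at this
      linarith
    · intro p q hpq hp
      have h1 := hmono p q hpq
      have h2 := (hbd q).2
      linarith
  · rintro ⟨h01, hfil⟩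
    have hbd : ∀ p, a p ∈ Set.Icc (0 : ℝ) 1 := by
      intro p
      rcases h01 p with h | h <;> rw [h] <;> constructor <;> norm_num
    have hmono : ∀ p q : P, p ≤ q → a p ≤ a q := by
      intro p q hpq
      rcases h01 p with h | h
      · rw [h]; exact (hbd q).1
      · rw [h, hfil p q hpq h]
    refine ⟨⟨hbd, hmono⟩, ?_⟩
    rintro x₁ ⟨hb1, _⟩ x₂ ⟨hb2, _⟩ ⟨t, s, ht, hs, hts, heq⟩
    have key : ∀ q, x₁ q = a q ∧ x₂ q = a q := by
      intro q
      have hq : t * x₁ q + s * x₂ q = a q := by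
        have := congrFun heq q
        simpa using this
      have hb1q := hb1 q
      have hb2q := hb2 q
      simp only [Set.mem_Icc] at hb1q hb2q
      rcases h01 q with h | h <;> rw [h] at hq ⊢ <;>
        constructor <;> nlinarith [hb1q.1, hb1q.2, hb2q.1, hb2q.2]
    exact ⟨funext fun q => (key q).1, funext fun q => (key q).2⟩
end

section
/- Let P be a finite poset and V_P ⊆ ℂ^P the set of indicator vectors of order filters of P. Then the vanishing ideal I(V_P) ⊆ ℂ[z_p : p ∈ P] is generated by the polynomials z_p² − z_p for p ∈ P together with z_p(1 − z_q) for all pairs p ≤ q in P. -/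
open MvPolynomial

set_option linter.unusedSectionVars false

namespace Stmt8Aux

open scoped Classical

variable {P : Type*} [PartialOrder P] [Fintype P]

noncomputable def gens (P : Type*) [PartialOrder P] : Set (MvPolynomial P ℂ) :=
  (Set.range fun p : P => (X p) ^ 2 - X p) ∪
    {f | ∃ p q : P, p ≤ q ∧ f = X p * ((1 : MvPolynomial P ℂ) - X q)}

noncomputable def Igen (P : Type*) [PartialOrder P] : Ideal (MvPolynomial P ℂ) :=
  Ideal.span (gens P)

def Good (a : P → ℂ) : Prop :=
  (∀ p, a p = 0 ∨ a p = 1) ∧ ∀ p q : P, p ≤ q → a p = 1 → a q = 1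

lemma eval_eq_zero_of_mem {a : P → ℂ} (ha : Good a) {f : MvPolynomial P ℂ}
    (hf : f ∈ Igen P) : eval a f = 0 := by
  have hle : Igen P ≤ RingHom.ker (eval a) := by
    rw [Igen, Ideal.span_le]
    rintro g (⟨p, rfl⟩ | ⟨p, q, hpq, rfl⟩)
    · simp only [RingHom.mem_ker, SetLike.mem_coe, map_sub, map_pow, eval_X]
      rcases ha.1 p with h | h <;> simp [h]
    · simp only [RingHom.mem_ker, SetLike.mem_coe, map_mul, map_sub, map_one, eval_X]
      rcases ha.1 p with h | h
      · simp [h]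
      · simp [h, ha.2 p q hpq h]
  exact hle hf

lemma mk_X_mul {p q : P} (hpq : p ≤ q) :
    Ideal.Quotient.mk (Igen P) (X p * X q) = Ideal.Quotient.mk (Igen P) (X p) := by
  rw [Ideal.Quotient.eq]
  have h : X p * X q - X p = -(X p * ((1 : MvPolynomial P ℂ) - X q)) := by ring
  rw [h]
  exact neg_mem (Ideal.subset_span (Or.inr ⟨p, q, hpq, rfl⟩))

lemma mk_X_pow (p : P) {n : ℕ} (hn : n ≠ 0) :
    Ideal.Quotient.mk (Igen P) (X p ^ n) = Ideal.Quotient.mk (Igen P) (X p) := by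
  induction n with
  | zero => exact absurd rfl hn
  | succ n ih =>
    rcases Nat.eq_zero_or_pos n with h | h
    · subst h; simp
    · rw [pow_succ, map_mul, ih (by omega), ← map_mul, mk_X_mul le_rfl]

noncomputable def mF (F : Finset P) : MvPolynomial P ℂ := ∏ p ∈ F, X p

lemma absorb {S : Finset P} {q : P} (h : ∃ p ∈ S, p ≤ q) :
    Ideal.Quotient.mk (Igen P) (mF S * X q) = Ideal.Quotient.mk (Igen P) (mF S) := by
  obtain ⟨p, hp, hpq⟩ := h
  rw [mF, ← Finset.mul_prod_erase S _ hp, mul_right_comm, map_mul,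
    mk_X_mul hpq, ← map_mul]

lemma absorb_prod (S T : Finset P) (hT : ∀ q ∈ T, ∃ p ∈ S, p ≤ q) :
    Ideal.Quotient.mk (Igen P) (mF S * mF T) = Ideal.Quotient.mk (Igen P) (mF S) := by
  induction T using Finset.induction with
  | empty => simp [mF]
  | @insert a T ha ih =>
    have h1 : mF S * mF (insert a T) = (mF S * X a) * mF T := by
      simp only [mF, Finset.prod_insert ha]; ring
    rw [h1, map_mul, absorb (hT a (Finset.mem_insert_self a T)), ← map_mul]
    exact ih fun q hq => hT q (Finset.mem_insert_of_mem hq)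

noncomputable def up (S : Finset P) : Finset P :=
  Finset.univ.filter fun q => ∃ p ∈ S, p ≤ q

def IsFilter (F : Finset P) : Prop := ∀ ⦃p q : P⦄, p ≤ q → p ∈ F → q ∈ F

lemma subset_up (S : Finset P) : S ⊆ up S := fun p hp =>
  Finset.mem_filter.mpr ⟨Finset.mem_univ _, ⟨p, hp, le_rfl⟩⟩

lemma isFilter_up (S : Finset P) : IsFilter (up S) := by
  intro p q hpq hp
  obtain ⟨r, hr, hrp⟩ := (Finset.mem_filter.mp hp).2
  exact Finset.mem_filter.mpr ⟨Finset.mem_univ _, ⟨r, hr, hrp.trans hpq⟩⟩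

lemma mk_monomial (d : P →₀ ℕ) :
    Ideal.Quotient.mk (Igen P) (monomial d (1 : ℂ)) =
      Ideal.Quotient.mk (Igen P) (mF (up d.support)) := by
  have h1 : (monomial d (1 : ℂ)) = ∏ p ∈ d.support, X p ^ d p := by
    rw [monomial_eq]
    simp [Finsupp.prod]
  rw [h1, map_prod, Finset.prod_congr rfl
    (fun p hp => mk_X_pow p (Finsupp.mem_support_iff.mp hp)), ← map_prod]
  have h2 : mF (up d.support) = mF d.support * mF (up d.support \ d.support) := by
    simp only [mF]
    rw [← Finset.prod_union Finset.disjoint_sdiff,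
      Finset.union_sdiff_of_subset (subset_up _)]
  rw [show (∏ p ∈ d.support, X p) = mF d.support from rfl, h2]
  exact (absorb_prod _ _
    (fun q hq => (Finset.mem_filter.mp (Finset.mem_sdiff.mp hq).1).2)).symm

lemma top_le :
    (⊤ : Submodule ℂ (MvPolynomial P ℂ)) ≤
      (Igen P).restrictScalars ℂ ⊔
        Submodule.span ℂ (Set.range fun F : {F : Finset P // IsFilter F} => mF F.1) := by
  intro f _
  rw [f.as_sum]
  refine Submodule.sum_mem _ fun d _ => ?_
  have hmono : (monomial d (coeff d f) : MvPolynomial P ℂ)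
      = (coeff d f) • monomial d 1 := by
    rw [smul_monomial, smul_eq_mul, mul_one]
  rw [hmono]
  refine Submodule.smul_mem _ _ ?_
  have h1 : monomial d (1 : ℂ) - mF (up d.support) ∈ Igen P :=
    Ideal.Quotient.eq.mp (mk_monomial d)
  have h2 : mF (up d.support) ∈
      Submodule.span ℂ (Set.range fun F : {F : Finset P // IsFilter F} => mF F.1) :=
    Submodule.subset_span ⟨⟨up d.support, isFilter_up _⟩, rfl⟩
  have := Submodule.add_mem _
    (Submodule.mem_sup_left (show monomial d (1 : ℂ) - mF (up d.support) ∈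
      (Igen P).restrictScalars ℂ from h1))
    (Submodule.mem_sup_right h2)
  simpa using this

noncomputable def aF (G : Finset P) : P → ℂ := fun p => if p ∈ G then 1 else 0

lemma good_aF {G : Finset P} (hG : IsFilter G) : Good (aF G) := by
  constructor
  · intro p
    by_cases h : p ∈ G <;> simp [aF, h]
  · intro p q hpq hp
    have hpG : p ∈ G := by
      by_contra h
      simp [aF, h] at hp
    simp [aF, hG hpq hpG]

lemma eval_mF (F G : Finset P) :
    eval (aF G) (mF F) = if F ⊆ G then 1 else 0 := by
  rw [mF, map_prod]
  simp only [eval_X, aF]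
  by_cases h : F ⊆ G
  · rw [if_pos h, Finset.prod_eq_one]
    intro p hp
    rw [if_pos (h hp)]
  · rw [if_neg h]
    obtain ⟨p, hp, hpG⟩ := Finset.not_subset.mp h
    exact Finset.prod_eq_zero hp (by rw [if_neg hpG])

lemma coeff_zero (c : {F : Finset P // IsFilter F} → ℂ)
    (h : ∀ G : {F : Finset P // IsFilter F},
      ∑ F : {F : Finset P // IsFilter F}, (if F.1 ⊆ G.1 then c F else 0) = 0) :
    ∀ F, c F = 0 := by
  suffices H : ∀ G : Finset P, ∀ hG : IsFilter G, c ⟨G, hG⟩ = 0 by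
    intro F; exact H F.1 F.2
  intro G
  induction G using Finset.strongInduction with
  | _ G ih =>
    intro hG
    have h0 := h ⟨G, hG⟩
    rw [Finset.sum_eq_single (⟨G, hG⟩ : {F : Finset P // IsFilter F})] at h0
    · simpa using h0
    · intro F _ hFne
      by_cases hF : F.1 ⊆ G
      · have hss : F.1 ⊂ G := lt_of_le_of_ne hF (fun he => hFne (Subtype.ext he))
        rw [if_pos hF]
        have := ih F.1 hss F.2
        simpa using this
      · rw [if_neg hF]
    · intro habs
      exact absurd (Finset.mem_univ _) habs

end Stmt8Aux

/-- The vanishing ideal of the set of indicator vectors of order filters of a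
finite poset `P` is generated by `z_p² − z_p` and `z_p(1 − z_q)` for `p ≤ q`. -/
theorem stmt8 {P : Type*} [PartialOrder P] [Fintype P] :
    {f : MvPolynomial P ℂ |
        ∀ a : P → ℂ, ((∀ p, a p = 0 ∨ a p = 1) ∧
          ∀ p q : P, p ≤ q → a p = 1 → a q = 1) → eval a f = 0}
      = ↑(Ideal.span
          ((Set.range fun p : P => (X p) ^ 2 - X p) ∪
            {f | ∃ p q : P, p ≤ q ∧ f = X p * ((1 : MvPolynomial P ℂ) - X q)})) := by
  classical
  ext f
  simp only [Set.mem_setOf_eq, SetLike.mem_coe]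
  constructor
  · intro hf
    show f ∈ Stmt8Aux.Igen P
    have hmem := Stmt8Aux.top_le (Submodule.mem_top :
      f ∈ (⊤ : Submodule ℂ (MvPolynomial P ℂ)))
    obtain ⟨i, hi, s, hs, rfl⟩ := Submodule.mem_sup.mp hmem
    obtain ⟨c, hc⟩ := Submodule.mem_span_range_iff_exists_fun ℂ |>.mp hs
    have hkey : ∀ F, c F = 0 := by
      refine Stmt8Aux.coeff_zero c fun G => ?_
      have hg := Stmt8Aux.good_aF G.2
      have h1 : eval (Stmt8Aux.aF G.1) (i + s) = 0 := hf _ ⟨hg.1, hg.2⟩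
      have h2 : eval (Stmt8Aux.aF G.1) i = 0 := Stmt8Aux.eval_eq_zero_of_mem hg hi
      have h3 : eval (Stmt8Aux.aF G.1) s = 0 := by
        rw [map_add, h2, zero_add] at h1; exact h1
      rw [← hc, map_sum] at h3
      simpa only [smul_eq_C_mul, map_mul, eval_C, Stmt8Aux.eval_mF, mul_ite,
        mul_one, mul_zero] using h3
    have hs0 : s = 0 := by
      rw [← hc]
      simp [hkey]
    rw [hs0, add_zero]
    exact hi
  · intro hf a ha
    exact Stmt8Aux.eval_eq_zero_of_mem ⟨ha.1, ha.2⟩ hf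
end
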